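/- arXiv:1308.1269 — 5 statements merged into one kernel-verified Lean document; each statement's English description precedes it below -/
import Mathlib

section
/- Let (a_i)_{i≥1} and (b_i)_{i≥1} be sequences of non-negative, non-increasing real numbers such that there exists i* ∈ ℕ with a_i ≤ b_i for all i ≤ i* and a_i ≥ b_i for all i > i*. If ∑_{i=1}^∞ a_i = ∑_{i=1}^∞ b_i < ∞, then for every real number m ≥ 1, ∑_{i=1}^∞ a_i^m ≤ ∑_{i=1}^∞ b_i^m. -/
/-!
By convexity, `y ^ m ≥ x ^ m + m x ^ (m - 1) (y - x)`. Put `x = aᵢ`, `y = bᵢ` and replace the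
slope `m aᵢ ^ (m - 1)` by the constant `m K`, `K = a_{i*+1} ^ (m - 1)`: since `a` is non-increasing,
this only helps, because `aᵢ - bᵢ ≤ 0` exactly where `aᵢ ^ (m - 1) ≥ K`. Hence
`aᵢ ^ m ≤ bᵢ ^ m + m K (aᵢ - bᵢ)`, and the correction terms sum to `m K (∑ aᵢ - ∑ bᵢ) = 0`.
-/

open Real

lemma rpow_tangent_le {x y m : ℝ} (hx : 0 ≤ x) (hy : 0 ≤ y) (hm : 1 ≤ m) :
    x ^ m + m * x ^ (m - 1) * (y - x) ≤ y ^ m := by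
  rcases hx.eq_or_lt with rfl | hxpos
  · rcases hm.eq_or_lt with rfl | hm1
    · simp
    · rw [zero_rpow (by linarith), zero_rpow (by linarith)]
      simpa using rpow_nonneg hy m
  · have hbernoulli := one_add_mul_self_le_rpow_one_add
      (show -1 ≤ (y - x) / x by rw [le_div_iff₀ hxpos]; linarith) hm
    have hyx : 1 + (y - x) / x = y / x := by field_simp; ring
    rw [hyx, div_rpow hy hxpos.le, le_div_iff₀ (rpow_pos_of_pos hxpos m)] at hbernoulli
    calc x ^ m + m * x ^ (m - 1) * (y - x)
        = (1 + m * ((y - x) / x)) * x ^ m := by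
          rw [rpow_sub hxpos, rpow_one]; field_simp
      _ ≤ y ^ m := hbernoulli

lemma rpow_le_rpow_add_mul_sub {x y K m : ℝ} (hx : 0 ≤ x) (hy : 0 ≤ y) (hm : 1 ≤ m)
    (hK : 0 ≤ (K - x ^ (m - 1)) * (x - y)) : x ^ m ≤ y ^ m + m * K * (x - y) := by
  have hmK : 0 ≤ m * ((K - x ^ (m - 1)) * (x - y)) := mul_nonneg (by linarith) hK
  linear_combination rpow_tangent_le hx hy hm + hmK

lemma Summable.rpow_of_one_le {ι : Type*} {c : ι → ℝ} (hs : Summable c) (hc : ∀ i, 0 ≤ c i)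
    {m : ℝ} (hm : 1 ≤ m) : Summable fun i => c i ^ m := by
  have hc1 : Memℓp c 1 := memℓp_gen (by simpa [abs_of_nonneg (hc _)] using hs)
  have hm0 : 0 ≤ m := zero_le_one.trans hm
  have hcm := (memℓp_gen_iff (p := ENNReal.ofReal m)
    (by rw [ENNReal.toReal_ofReal hm0]; linarith)).mp (hc1.of_exponent_ge (by simpa using hm))
  simpa [abs_of_nonneg (hc _), ENNReal.toReal_ofReal hm0] using hcm

lemma crossing_mul_nonneg {a b c : ℕ → ℝ} {n : ℕ} (hc : Antitone c)
    (hle : ∀ i ≤ n, a i ≤ b i) (hge : ∀ i > n, b i ≤ a i) (i : ℕ) :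
    0 ≤ (c (n + 1) - c i) * (a i - b i) := by
  rcases le_or_gt i n with hi | hi
  · exact mul_nonneg_of_nonpos_of_nonpos (sub_nonpos.2 (hc (by omega))) (sub_nonpos.2 (hle i hi))
  · exact mul_nonneg (sub_nonneg.2 (hc (by omega))) (sub_nonneg.2 (hge i hi))

theorem stmt_14_general (a b : ℕ → ℝ)
    (ha0 : ∀ i, 0 ≤ a i) (hb0 : ∀ i, 0 ≤ b i)
    (hamono : ∀ i, a (i + 1) ≤ a i)
    (istar : ℕ)
    (hcross₁ : ∀ i ≤ istar, a i ≤ b i) (hcross₂ : ∀ i > istar, b i ≤ a i)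
    (hsa : Summable a) (hsb : Summable b)
    (hsum : ∑' i, a i = ∑' i, b i)
    (m : ℝ) (hm : 1 ≤ m) :
    ∑' i, a i ^ m ≤ ∑' i, b i ^ m := by
  set K := a (istar + 1) ^ (m - 1)
  have hweights : Antitone fun i => a i ^ (m - 1) := fun i j hij =>
    rpow_le_rpow (ha0 j) (antitone_nat_of_succ_le hamono hij) (by linarith)
  have hpointwise : ∀ i, a i ^ m ≤ b i ^ m + m * K * (a i - b i) := fun i =>
    rpow_le_rpow_add_mul_sub (ha0 i) (hb0 i) hm (crossing_mul_nonneg hweights hcross₁ hcross₂ i)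
  have hsbm := hsb.rpow_of_one_le hb0 hm
  have hcorrection : Summable fun i => m * K * (a i - b i) := (hsa.sub hsb).mul_left _
  calc ∑' i, a i ^ m
      ≤ ∑' i, (b i ^ m + m * K * (a i - b i)) :=
        (hsa.rpow_of_one_le ha0 hm).tsum_le_tsum hpointwise (hsbm.add hcorrection)
    _ = ∑' i, b i ^ m := by
        rw [hsbm.tsum_add hcorrection, tsum_mul_left, hsa.tsum_sub hsb, hsum, sub_self, mul_zero,
          add_zero]

/-- Lemma 4(i) (Schur-majorisation inequality for powers of crossing sequences).
Sequences are indexed by `ℕ` (standing for the positive integers). -/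
theorem stmt_14 (a b : ℕ → ℝ)
    (ha0 : ∀ i, 0 ≤ a i) (hb0 : ∀ i, 0 ≤ b i)
    (hamono : ∀ i, a (i + 1) ≤ a i) (hbmono : ∀ i, b (i + 1) ≤ b i)
    (istar : ℕ)
    (hcross₁ : ∀ i ≤ istar, a i ≤ b i) (hcross₂ : ∀ i > istar, b i ≤ a i)
    (hsa : Summable a) (hsb : Summable b)
    (hsum : ∑' i, a i = ∑' i, b i)
    (m : ℝ) (hm : 1 ≤ m) :
    ∑' i, a i ^ m ≤ ∑' i, b i ^ m :=
  stmt_14_general a b ha0 hb0 hamono istar hcross₁ hcross₂ hsa hsb hsum m hm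
end

section
/- Let (a_i)_{i≥1} and (b_i)_{i≥1} be sequences of non-negative, non-increasing real numbers such that there exists i* ∈ ℕ with a_i ≤ b_i for all i ≤ i* and a_i ≥ b_i for all i > i*. Let (c_i)_{i≥1} be a sequence of non-negative, non-decreasing real numbers. If ∑_{i=1}^∞ b_i ≤ ∑_{i=1}^∞ a_i < ∞ and both ∑_{i=1}^∞ c_i a_i < ∞ and ∑_{i=1}^∞ c_i b_i < ∞, then ∑_{i=1}^∞ c_i a_i ≥ ∑_{i=1}^∞ c_i b_i. -/
/-! The differences `d i = a i - b i` change sign once, from `≤ 0` to `≥ 0`, at `istar`.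
Against a non-decreasing weight this gives `c istar * d i ≤ c i * d i` termwise, hence
`∑ c i * d i ≥ c istar * ∑ d i ≥ 0`. -/

theorem mul_tsum_le_tsum_mul_of_sign_change {ι : Type*} [LinearOrder ι] {c d : ι → ℝ}
    (hc : Monotone c) (k : ι) (hneg : ∀ i ≤ k, d i ≤ 0) (hpos : ∀ i, k < i → 0 ≤ d i)
    (hd : Summable d) (hcd : Summable fun i => c i * d i) :
    c k * ∑' i, d i ≤ ∑' i, c i * d i := by
  rw [← tsum_mul_left]
  refine (hd.mul_left (c k)).tsum_le_tsum (fun i => ?_) hcd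
  rcases le_or_gt i k with h | h
  · exact mul_le_mul_of_nonpos_right (hc h) (hneg i h)
  · exact mul_le_mul_of_nonneg_right (hc h.le) (hpos i h)

theorem stmt_15_general (a b c : ℕ → ℝ)
    (hc0 : ∀ i, 0 ≤ c i)
    (hcmono : ∀ i, c i ≤ c (i + 1))
    (istar : ℕ)
    (hcross₁ : ∀ i ≤ istar, a i ≤ b i) (hcross₂ : ∀ i > istar, b i ≤ a i)
    (hsa : Summable a) (hsb : Summable b)
    (hba : ∑' i, b i ≤ ∑' i, a i)
    (hsca : Summable (fun i => c i * a i)) (hscb : Summable (fun i => c i * b i)) :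
    ∑' i, c i * b i ≤ ∑' i, c i * a i := by
  have hscd : Summable fun i => c i * (a i - b i) := by
    simpa only [mul_sub] using hsca.sub hscb
  have hweighted := mul_tsum_le_tsum_mul_of_sign_change (monotone_nat_of_le_succ hcmono) istar
    (fun i hi => sub_nonpos.2 (hcross₁ i hi)) (fun i hi => sub_nonneg.2 (hcross₂ i hi))
    (hsa.sub hsb) hscd
  have hsum : 0 ≤ ∑' i, (a i - b i) := by
    rw [hsa.tsum_sub hsb]
    linarith
  have hsplit : ∑' i, c i * (a i - b i) = ∑' i, c i * a i - ∑' i, c i * b i := by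
    simp only [mul_sub]
    exact hsca.tsum_sub hscb
  linarith [mul_nonneg (hc0 istar) hsum]

/-- Lemma 4(ii) (rearrangement-type inequality for crossing sequences against
non-decreasing weights). Sequences are indexed by `ℕ` (standing for the positive
integers). -/
theorem stmt_15 (a b c : ℕ → ℝ)
    (ha0 : ∀ i, 0 ≤ a i) (hb0 : ∀ i, 0 ≤ b i) (hc0 : ∀ i, 0 ≤ c i)
    (hamono : ∀ i, a (i + 1) ≤ a i) (hbmono : ∀ i, b (i + 1) ≤ b i)
    (hcmono : ∀ i, c i ≤ c (i + 1))
    (istar : ℕ)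
    (hcross₁ : ∀ i ≤ istar, a i ≤ b i) (hcross₂ : ∀ i > istar, b i ≤ a i)
    (hsa : Summable a) (hsb : Summable b)
    (hba : ∑' i, b i ≤ ∑' i, a i)
    (hsca : Summable (fun i => c i * a i)) (hscb : Summable (fun i => c i * b i)) :
    ∑' i, c i * b i ≤ ∑' i, c i * a i :=
  stmt_15_general a b c hc0 hcmono istar hcross₁ hcross₂ hsa hsb hba hsca hscb
end

section
/- Let p, q be integers with 1 ≤ q ≤ p and let m ≥ 1 be a real number. Then (q/p)^{m−1} ≥ ∑_{ℓ=1}^p ( C(p−ℓ, q−1)/C(p, q) )^m ≥ (q/p)^m / (1 − (1 − q/p)^m). -/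
/-!
The weights `a_ℓ = C(p-ℓ, q-1) / C(p, q)` are the law of the minimum of a uniformly random
`q`-subset of `{1, …, p}`. They sum to `1` and are at most `a_1 = q/p`, which gives the upper
bound. Their tails `C(p-k, q) / C(p, q)` are at most `(1 - q/p)^k`, the tails of the geometric law
`b_ℓ = (q/p) (1 - q/p)^(ℓ-1)`; so `a` has larger partial sums than the decreasing sequence `b`.
Summing the tangent-line inequality `a^m ≥ b^m + m b^(m-1) (a - b)` and applying Abel summation
gives `∑ a_ℓ^m ≥ ∑ b_ℓ^m = (q/p)^m / (1 - (1 - q/p)^m)`.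
-/

open Finset Real Filter

theorem rpow_add_mul_rpow_sub_one_mul_sub_le_rpow {x y m : ℝ} (hx : 0 ≤ x) (hy : 0 ≤ y)
    (hm : 1 ≤ m) : y ^ m + m * y ^ (m - 1) * (x - y) ≤ x ^ m := by
  rcases hy.eq_or_lt with rfl | hy
  · rcases hm.eq_or_lt with rfl | hm
    · simp
    · rw [zero_rpow (by linarith), zero_rpow (by linarith)]
      simpa using rpow_nonneg hx m
  · have hbernoulli := one_add_mul_self_le_rpow_one_add
      (by linarith [div_nonneg hx hy.le] : -1 ≤ x / y - 1) hm
    rw [add_sub_cancel, div_rpow hx hy.le, le_div_iff₀ (rpow_pos_of_pos hy m)] at hbernoulli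
    calc y ^ m + m * y ^ (m - 1) * (x - y) = (1 + m * (x / y - 1)) * y ^ m := by
          rw [rpow_sub_one hy.ne']; field_simp
      _ ≤ x ^ m := hbernoulli

theorem sum_range_mul_nonneg_of_antitone {c d : ℕ → ℝ} (hc : ∀ i, 0 ≤ c i) (hc' : Antitone c)
    (hd : ∀ k, 0 ≤ ∑ i ∈ range k, d i) (n : ℕ) : 0 ≤ ∑ i ∈ range n, c i * d i := by
  have hparts := sum_range_by_parts c d n
  simp only [smul_eq_mul] at hparts
  rw [hparts, sub_nonneg]
  refine (sum_nonpos fun i _ => ?_).trans (mul_nonneg (hc _) (hd n))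
  exact mul_nonpos_of_nonpos_of_nonneg (sub_nonpos.2 (hc' i.le_succ)) (hd _)

theorem sum_range_rpow_le_of_sum_range_le {a b : ℕ → ℝ} {m : ℝ} (ha : ∀ i, 0 ≤ a i)
    (hb : ∀ i, 0 ≤ b i) (hb' : Antitone b)
    (hab : ∀ k, ∑ i ∈ range k, b i ≤ ∑ i ∈ range k, a i) (hm : 1 ≤ m) (n : ℕ) :
    ∑ i ∈ range n, b i ^ m ≤ ∑ i ∈ range n, a i ^ m := by
  have habel : 0 ≤ ∑ i ∈ range n, b i ^ (m - 1) * (a i - b i) :=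
    sum_range_mul_nonneg_of_antitone (fun i => rpow_nonneg (hb i) _)
      (fun i j hij => rpow_le_rpow (hb j) (hb' hij) (by linarith))
      (fun k => by rw [sum_sub_distrib]; linarith [hab k]) n
  calc ∑ i ∈ range n, b i ^ m
      ≤ ∑ i ∈ range n, b i ^ m + m * ∑ i ∈ range n, b i ^ (m - 1) * (a i - b i) :=
        le_add_of_nonneg_right (mul_nonneg (by linarith) habel)
    _ = ∑ i ∈ range n, (b i ^ m + m * b i ^ (m - 1) * (a i - b i)) := by
        rw [mul_sum, ← sum_add_distrib]; simp only [mul_assoc]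
    _ ≤ ∑ i ∈ range n, a i ^ m :=
        sum_le_sum fun i _ => rpow_add_mul_rpow_sub_one_mul_sub_le_rpow (ha i) (hb i) hm

theorem hasSum_rpow_geometric {r m : ℝ} (hr0 : 0 ≤ r) (hr1 : r < 1) (hm : 0 < m) :
    HasSum (fun i : ℕ => ((1 - r) * r ^ i) ^ m) ((1 - r) ^ m / (1 - r ^ m)) := by
  rw [div_eq_mul_inv]
  refine ((hasSum_geometric_of_lt_one (rpow_nonneg hr0 m) (rpow_lt_one hr0 hr1 hm)).mul_left
    ((1 - r) ^ m)).congr_fun fun i => ?_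
  rw [mul_rpow (by linarith) (pow_nonneg hr0 i), ← rpow_natCast_mul hr0, mul_comm (i : ℝ),
    rpow_mul_natCast hr0]

theorem one_sub_rpow_div_one_sub_rpow_le_sum_range_rpow {a : ℕ → ℝ} {p : ℕ} {r m : ℝ}
    (ha : ∀ i, 0 ≤ a i) (hap : ∀ i ≥ p, a i = 0) (hr0 : 0 ≤ r) (hr1 : r < 1) (hm : 1 ≤ m)
    (htail : ∀ k, 1 - r ^ k ≤ ∑ i ∈ range k, a i) :
    (1 - r) ^ m / (1 - r ^ m) ≤ ∑ i ∈ range p, a i ^ m := by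
  have hgeom_partial (k : ℕ) : ∑ i ∈ range k, (1 - r) * r ^ i = 1 - r ^ k := by
    rw [← mul_sum]; linarith [geom_sum_mul r k]
  refine le_of_tendsto (hasSum_rpow_geometric hr0 hr1 (by linarith)).tendsto_sum_nat
    (eventually_atTop.2 ⟨p, fun n hn => ?_⟩)
  rw [← eventually_constant_sum (fun i hi => by rw [hap i hi, zero_rpow (by linarith)]) hn]
  refine sum_range_rpow_le_of_sum_range_le ha (fun i => mul_nonneg (by linarith) (pow_nonneg hr0 i))
    (fun i j hij => mul_le_mul_of_nonneg_left (pow_le_pow_of_le_one hr0 hr1.le hij) (by linarith))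
    (fun k => (hgeom_partial k).trans_le (htail k)) hm n

theorem sum_rpow_le_rpow_sub_one_mul_sum {ι : Type*} {s : Finset ι} {a : ι → ℝ} {c m : ℝ}
    (ha : ∀ i ∈ s, 0 ≤ a i) (hac : ∀ i ∈ s, a i ≤ c) (hm : 1 ≤ m) :
    ∑ i ∈ s, a i ^ m ≤ c ^ (m - 1) * ∑ i ∈ s, a i := by
  rw [mul_sum]
  refine sum_le_sum fun i hi => ?_
  calc a i ^ m = a i ^ (m - 1) * a i := by
        rw [← rpow_add_one' (ha i hi) (by linarith), sub_add_cancel]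
    _ ≤ c ^ (m - 1) * a i :=
        mul_le_mul_of_nonneg_right (rpow_le_rpow (ha i hi) (hac i hi) (by linarith)) (ha i hi)

theorem one_sub_natCast_div_nonneg {p q : ℕ} (hqp : q ≤ p) : (0 : ℝ) ≤ 1 - q / p :=
  sub_nonneg.2 (div_le_one_of_le₀ (by exact_mod_cast hqp) (by positivity))

namespace SubsetMin

/-- `P(min S > k)` for `S` a uniformly random `q`-subset of `{1, …, p}`. -/
noncomputable def tail (p q k : ℕ) : ℝ := ((p - k).choose q : ℝ) / p.choose q

/-- `P(min S = i + 1)`. -/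
noncomputable def weight (p q i : ℕ) : ℝ := tail p q i - tail p q (i + 1)

variable {p q : ℕ}

theorem tail_zero (hqp : q ≤ p) : tail p q 0 = 1 := by
  have : (p.choose q : ℝ) ≠ 0 := by exact_mod_cast (Nat.choose_pos hqp).ne'
  simp [tail, this]

theorem tail_eq_zero (hq : 1 ≤ q) {k : ℕ} (hk : p ≤ k) : tail p q k = 0 := by
  simp [tail, Nat.sub_eq_zero_of_le hk, Nat.choose_eq_zero_of_lt hq]

theorem tail_succ_le_mul (hq : 1 ≤ q) (hqp : q ≤ p) (k : ℕ) :
    tail p q (k + 1) ≤ (1 - q / p) * tail p q k := by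
  rcases le_or_gt p k with hk | hk
  · rw [tail_eq_zero hq hk, tail_eq_zero hq (by omega), mul_zero]
  obtain ⟨n, hn⟩ : ∃ n, p - k = n + 1 := ⟨p - (k + 1), by omega⟩
  have hnp : (n : ℝ) + 1 ≤ p := by exact_mod_cast (by omega : n + 1 ≤ p)
  have hC : (0 : ℝ) < p.choose q := by exact_mod_cast Nat.choose_pos hqp
  have hp : (0 : ℝ) < p := by exact_mod_cast (by omega : 0 < p)
  rw [tail, tail, hn, show p - (k + 1) = n by omega, ← mul_div_assoc,
    div_le_div_iff_of_pos_right hC, one_sub_div hp.ne', div_mul_eq_mul_div, le_div_iff₀ hp]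
  rcases le_or_gt q (n + 1) with hqn | hqn
  · -- `C(n, q) / C(n + 1, q) = 1 - q / (n + 1) ≤ 1 - q / p`
    have hratio := Nat.choose_mul_succ_eq n q
    rw [← Nat.cast_inj (R := ℝ)] at hratio
    push_cast [hqn] at hratio
    have : (0 : ℝ) ≤ (n + 1).choose q * q * (p - (n + 1)) :=
      mul_nonneg (by positivity) (by linarith)
    nlinarith
  · rw [Nat.choose_eq_zero_of_lt (by omega : n < q)]
    have : (q : ℝ) ≤ p := by exact_mod_cast hqp
    simp only [Nat.cast_zero, zero_mul]
    exact mul_nonneg (by linarith) (by positivity)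

theorem tail_le_pow (hq : 1 ≤ q) (hqp : q ≤ p) (k : ℕ) : tail p q k ≤ (1 - q / p) ^ k := by
  induction k with
  | zero => rw [tail_zero hqp, pow_zero]
  | succ k ih =>
    rw [pow_succ']
    exact (tail_succ_le_mul hq hqp k).trans
      (mul_le_mul_of_nonneg_left ih (one_sub_natCast_div_nonneg hqp))

theorem sum_range_weight (hqp : q ≤ p) (k : ℕ) :
    ∑ i ∈ range k, weight p q i = 1 - tail p q k := by
  rw [← tail_zero hqp]; exact sum_range_sub' _ k

theorem weight_eq (hq : 1 ≤ q) {i : ℕ} (hi : i < p) :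
    weight p q i = ((p - (i + 1)).choose (q - 1) : ℝ) / p.choose q := by
  obtain ⟨q, rfl⟩ : ∃ q', q = q' + 1 := ⟨q - 1, by omega⟩
  rw [weight, tail, tail, show p - i = p - (i + 1) + 1 by omega, Nat.choose_succ_succ',
    Nat.add_sub_cancel, Nat.cast_add]
  ring

theorem weight_eq_zero (hq : 1 ≤ q) {i : ℕ} (hi : p ≤ i) : weight p q i = 0 := by
  rw [weight, tail_eq_zero hq hi, tail_eq_zero hq (by omega), sub_zero]

theorem weight_nonneg (i : ℕ) : 0 ≤ weight p q i := by
  rw [weight, tail, tail, sub_nonneg]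
  gcongr
  omega

theorem weight_le (hq : 1 ≤ q) (hqp : q ≤ p) (i : ℕ) : weight p q i ≤ q / p := by
  rcases le_or_gt p i with hi | hi
  · rw [weight_eq_zero hq hi]; positivity
  have hC : (0 : ℝ) < p.choose q := by exact_mod_cast Nat.choose_pos hqp
  have hp : (0 : ℝ) < p := by exact_mod_cast (by omega : 0 < p)
  have hfirst : (p : ℝ) * (p - 1).choose (q - 1) = p.choose q * q := by
    have h := Nat.add_one_mul_choose_eq (p - 1) (q - 1)
    rw [show p - 1 + 1 = p by omega, show q - 1 + 1 = q by omega] at h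
    exact_mod_cast h
  have hmono : ((p - (i + 1)).choose (q - 1) : ℝ) ≤ (p - 1).choose (q - 1) := by
    exact_mod_cast Nat.choose_le_choose (q - 1) (by omega)
  rw [weight_eq hq hi, div_le_div_iff₀ hC hp]
  nlinarith

end SubsetMin

/-- Lemma 5 (bounds for power sums of the hypergeometric-type weights);
the powers are real powers. -/
theorem stmt_16 (p q : ℕ) (hq : 1 ≤ q) (hqp : q ≤ p) (m : ℝ) (hm : 1 ≤ m) :
    (∑ ℓ ∈ Finset.Icc 1 p, (((p - ℓ).choose (q - 1) : ℝ) / (p.choose q : ℝ)) ^ m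
      ≤ ((q : ℝ) / p) ^ (m - 1)) ∧
    (((q : ℝ) / p) ^ m / (1 - (1 - (q : ℝ) / p) ^ m)
      ≤ ∑ ℓ ∈ Finset.Icc 1 p, (((p - ℓ).choose (q - 1) : ℝ) / (p.choose q : ℝ)) ^ m) := by
  have hsum : ∑ ℓ ∈ Icc 1 p, (((p - ℓ).choose (q - 1) : ℝ) / p.choose q) ^ m
      = ∑ i ∈ range p, SubsetMin.weight p q i ^ m := by
    rw [← Ico_add_one_right_eq_Icc, sum_Ico_eq_sum_range, Nat.add_sub_cancel]
    exact sum_congr rfl fun i hi => by rw [SubsetMin.weight_eq hq (mem_range.1 hi), add_comm]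
  have hp : 0 < p := by omega
  have hr1 : 1 - (q : ℝ) / p < 1 := sub_lt_self 1 (by positivity)
  rw [hsum]
  constructor
  · calc ∑ i ∈ range p, SubsetMin.weight p q i ^ m
        ≤ ((q : ℝ) / p) ^ (m - 1) * ∑ i ∈ range p, SubsetMin.weight p q i :=
          sum_rpow_le_rpow_sub_one_mul_sum (fun i _ => SubsetMin.weight_nonneg i)
            (fun i _ => SubsetMin.weight_le hq hqp i) hm
      _ = ((q : ℝ) / p) ^ (m - 1) := by
          rw [SubsetMin.sum_range_weight hqp, SubsetMin.tail_eq_zero hq le_rfl, sub_zero, mul_one]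
  · simpa only [sub_sub_cancel] using one_sub_rpow_div_one_sub_rpow_le_sum_range_rpow
      SubsetMin.weight_nonneg (fun i hi => SubsetMin.weight_eq_zero hq hi)
      (one_sub_natCast_div_nonneg hqp) hr1 hm
      fun k => by
        rw [SubsetMin.sum_range_weight hqp]
        linarith [SubsetMin.tail_le_pow hq hqp k]
end

section
/- Let p, q be integers with 1 ≤ q ≤ p − 1 and p ≥ 3. Then ∑_{ℓ=1}^{p−1} ℓ · ( C(p−1−ℓ, q−1)/C(p−1, q) )² ≥ (1/(2 (2 − q/p)²)) · p/(p−1). -/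
open Finset

/-!
Write `N = p - 1` and `k = q - 1`. For `k = 0` the sum is `(N + 1) / (2 N)` exactly. Otherwise
Cauchy–Schwarz against the tent weight `ℓ (M - ℓ)` on `1 ≤ ℓ ≤ M` gives
`(∑ ℓ (M - ℓ) C(N - ℓ, k))² ≤ (∑ ℓ C(N - ℓ, k)²) · M² (M² - 1) / 12`.
Since `ℓ (M - ℓ) = (M - 1) C(ℓ, 1) - 2 C(ℓ, 2)` is nonpositive for `ℓ > M`, the upper
Chu–Vandermonde identity bounds the left-hand side below by
`(M - 1) C(N + 1, k + 2) - 2 C(N + 1, k + 3)`, which is `C(N, k + 1)` times an explicit rational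
function. Taking `M = ⌊4 (N - k - 1) / (k + 3)⌋ + 2`, close to the optimal width, the claim becomes
a polynomial inequality.
-/

theorem Nat.sum_antidiagonal_choose_mul_choose (n a b : ℕ) :
    ∑ ij ∈ antidiagonal n, ij.1.choose a * ij.2.choose b = (n + 1).choose (a + b + 1) := by
  induction n generalizing a with
  | zero =>
    rcases a with _ | a <;> rcases b with _ | b <;> simp [eq_comm (a := 0), Nat.choose_eq_zero_iff]
  | succ n ih =>
    rw [Nat.sum_antidiagonal_succ]
    rcases a with _ | a
    · have h := ih 0
      simp only [Nat.choose_zero_right, one_mul] at h ⊢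
      rw [h, zero_add, Nat.choose_succ_succ' (n + 1) b]
    · simp only [Nat.choose_succ_succ' _ a, add_mul, sum_add_distrib, ih, Nat.choose_zero_succ,
        zero_mul, zero_add]
      rw [show a + 1 + b + 1 = a + b + 1 + 1 by omega, Nat.choose_succ_succ' (n + 1) (a + b + 1)]

theorem sum_range_mul_sub_mul_choose (N k : ℕ) (M : ℝ) :
    ∑ ℓ ∈ range (N + 1), (ℓ : ℝ) * (M - ℓ) * (N - ℓ).choose k
      = (M - 1) * (N + 1).choose (k + 2) - 2 * (N + 1).choose (k + 3) := by
  have vandermonde (a : ℕ) :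
      ∑ ℓ ∈ range (N + 1), (ℓ.choose a : ℝ) * (N - ℓ).choose k = (N + 1).choose (a + k + 1) := by
    rw [← Nat.sum_antidiagonal_choose_mul_choose, Nat.sum_antidiagonal_eq_sum_range_succ_mk]
    push_cast
    rfl
  have hweight (ℓ : ℕ) : (ℓ : ℝ) * (M - ℓ) = (M - 1) * ℓ.choose 1 - 2 * ℓ.choose 2 := by
    rw [Nat.cast_choose_two, Nat.choose_one_right]
    ring
  simp only [hweight, sub_mul, mul_assoc, sum_sub_distrib, ← mul_sum, vandermonde]
  rw [show 1 + k + 1 = k + 2 by omega, show 2 + k + 1 = k + 3 by omega]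

theorem mul_sum_range_mul_sub_mul_choose {N k : ℕ} (hkN : k + 1 ≤ N) (M : ℝ) :
    ((k : ℝ) + 2) * (k + 3) * ∑ ℓ ∈ range (N + 1), (ℓ : ℝ) * (M - ℓ) * (N - ℓ).choose k
      = (N + 1) * N.choose (k + 1) * ((M - 1) * (k + 3) - 2 * ((N : ℝ) - k - 1)) := by
  have r1 : (N + 1) * N.choose (k + 1) = (N + 1).choose (k + 2) * (k + 2) :=
    Nat.add_one_mul_choose_eq N (k + 1)
  have r2 : (N + 1) * N.choose (k + 2) = (N + 1).choose (k + 3) * (k + 3) :=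
    Nat.add_one_mul_choose_eq N (k + 2)
  have r3 : N.choose (k + 2) * (k + 2) = N.choose (k + 1) * (N - (k + 1)) :=
    Nat.choose_succ_right_eq N (k + 1)
  rw [sum_range_mul_sub_mul_choose]
  rify [hkN] at r1 r2 r3
  linear_combination -(M - 1) * (k + 3) * r1 + 2 * (k + 2) * r2 - 2 * (N + 1) * r3

theorem sum_Icc_mul_sub_sq (M : ℕ) (x : ℝ) :
    ∑ ℓ ∈ Icc 1 M, (ℓ : ℝ) * (x - ℓ) ^ 2
      = x ^ 2 * (M * (M + 1) / 2) - 2 * x * (M * (M + 1) * (2 * M + 1) / 6)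
        + (M * (M + 1) / 2) ^ 2 := by
  induction M with
  | zero => simp
  | succ M ih => rw [sum_Icc_succ_top (by omega), ih]; push_cast; ring

theorem sq_sum_Icc_mul_sub_mul_le (M : ℕ) (c : ℕ → ℝ) :
    (∑ ℓ ∈ Icc 1 M, (ℓ : ℝ) * (M - ℓ) * c ℓ) ^ 2
      ≤ (∑ ℓ ∈ Icc 1 M, (ℓ : ℝ) * c ℓ ^ 2) * ((M : ℝ) ^ 2 * ((M : ℝ) ^ 2 - 1) / 12) := by
  have htent : ∑ ℓ ∈ Icc 1 M, (ℓ : ℝ) * (M - ℓ) ^ 2 = (M : ℝ) ^ 2 * ((M : ℝ) ^ 2 - 1) / 12 := by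
    rw [sum_Icc_mul_sub_sq]; ring
  rw [← htent]
  exact sum_sq_le_sum_mul_sum_of_sq_le_mul _ (fun ℓ _ ↦ by positivity) (fun ℓ _ ↦ by positivity)
    (fun ℓ _ ↦ le_of_eq (by ring))

theorem sum_range_mul_sub_mul_le_sum_Icc {M N : ℕ} (hMN : M ≤ N) {c : ℕ → ℝ}
    (hc : ∀ ℓ, 0 ≤ c ℓ) :
    ∑ ℓ ∈ range (N + 1), (ℓ : ℝ) * (M - ℓ) * c ℓ ≤ ∑ ℓ ∈ Icc 1 M, (ℓ : ℝ) * (M - ℓ) * c ℓ := by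
  have hsub : Icc 1 M ⊆ range (N + 1) := fun ℓ hℓ ↦ by
    simp only [mem_Icc, mem_range] at hℓ ⊢; omega
  rw [← sum_sdiff hsub]
  refine add_le_of_nonpos_left (sum_nonpos fun ℓ hℓ ↦ ?_)
  have hℓ : ℓ = 0 ∨ M < ℓ := by
    simp only [mem_sdiff, mem_Icc, mem_range] at hℓ; omega
  rcases hℓ with rfl | hℓ
  · simp
  · have : (M : ℝ) - ℓ ≤ 0 := by rw [sub_nonpos]; exact_mod_cast hℓ.le
    exact mul_nonpos_of_nonpos_of_nonneg
      (mul_nonpos_of_nonneg_of_nonpos (by positivity) this) (hc ℓ)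

/-- The Cauchy–Schwarz lower bound for `∑ ℓ (C(N - ℓ, k) / C(N, k + 1))²` obtained from the tent
weight `ℓ (M - ℓ)` on `1 ≤ ℓ ≤ M`. -/
noncomputable def tentBound (N k M : ℝ) : ℝ :=
  12 * (N + 1) ^ 2 * ((M - 1) * (k + 3) - 2 * (N - k - 1)) ^ 2
    / ((k + 2) ^ 2 * (k + 3) ^ 2 * (M ^ 2 * (M ^ 2 - 1)))

theorem tentBound_le_sum_mul_choose_div_choose_sq {N k M : ℕ} (hkN : k + 1 ≤ N) (hM : 2 ≤ M)
    (hMN : M ≤ N) (hX : 2 * ((N : ℝ) - k - 1) ≤ ((M : ℝ) - 1) * (k + 3)) :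
    tentBound N k M ≤ ∑ ℓ ∈ Icc 1 N, (ℓ : ℝ) * (((N - ℓ).choose k : ℝ) / N.choose (k + 1)) ^ 2 := by
  rw [tentBound]
  set C : ℝ := (N.choose (k + 1) : ℝ)
  set S := ∑ ℓ ∈ Icc 1 N, (ℓ : ℝ) * (((N - ℓ).choose k : ℝ) / C) ^ 2
  set X : ℝ := ((M : ℝ) - 1) * (k + 3) - 2 * ((N : ℝ) - k - 1)
  set T := ∑ ℓ ∈ range (N + 1), (ℓ : ℝ) * (M - ℓ) * (N - ℓ).choose k
  set D : ℝ := (M : ℝ) ^ 2 * ((M : ℝ) ^ 2 - 1)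
  have hC : 0 < C := Nat.cast_pos.2 (Nat.choose_pos hkN)
  have hT : ((k : ℝ) + 2) * (k + 3) * T = (N + 1) * C * X := mul_sum_range_mul_sub_mul_choose hkN M
  have hT0 : 0 ≤ T := by
    have hX0 : 0 ≤ X := by linarith
    have : 0 ≤ ((k : ℝ) + 2) * (k + 3) * T := by rw [hT]; positivity
    exact (mul_nonneg_iff_of_pos_left (by positivity)).1 this
  have hD : 0 < D := by
    have : (2 : ℝ) ≤ M := by exact_mod_cast hM
    exact mul_pos (by positivity) (by nlinarith)
  have hT2 : T ^ 2 ≤ C ^ 2 * S * (D / 12) :=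
    calc T ^ 2 ≤ (∑ ℓ ∈ Icc 1 M, (ℓ : ℝ) * (M - ℓ) * (N - ℓ).choose k) ^ 2 :=
          pow_le_pow_left₀ hT0 (sum_range_mul_sub_mul_le_sum_Icc hMN fun ℓ ↦ by positivity) 2
      _ ≤ (∑ ℓ ∈ Icc 1 M, (ℓ : ℝ) * ((N - ℓ).choose k) ^ 2) * (D / 12) :=
          sq_sum_Icc_mul_sub_mul_le M _
      _ ≤ (∑ ℓ ∈ Icc 1 N, (ℓ : ℝ) * ((N - ℓ).choose k) ^ 2) * (D / 12) := by
          gcongr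
      _ = C ^ 2 * S * (D / 12) := by
          rw [mul_sum]
          congr 1
          refine sum_congr rfl fun ℓ _ ↦ ?_
          field_simp
  rw [div_le_iff₀ (by positivity)]
  refine le_of_mul_le_mul_right ?_ (pow_pos hC 2)
  calc 12 * ((N : ℝ) + 1) ^ 2 * X ^ 2 * C ^ 2 = 12 * ((k + 2) ^ 2 * (k + 3) ^ 2) * T ^ 2 := by
        linear_combination (-12) * ((k + 2) * (k + 3) * T + (N + 1) * C * X) * hT
    _ ≤ 12 * ((k + 2) ^ 2 * (k + 3) ^ 2) * (C ^ 2 * S * (D / 12)) := by gcongr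
    _ = S * ((k + 2) ^ 2 * (k + 3) ^ 2 * D) * C ^ 2 := by ring

theorem tent_quartic_le {a d e : ℝ} (hd : 0 ≤ d) (he : 0 ≤ e) (hea : e ≤ a) (hade : a ≤ 4 * d + e) :
    (a + 4 * d + e) ^ 2 * ((4 * d + e) * (2 * a + 4 * d + e))
      ≤ 24 * (2 * d + e) ^ 2 * (a + 2 * d) ^ 2 := by
  have ha := sub_nonneg.2 hea
  have hd' := sub_nonneg.2 hade
  nlinarith [mul_nonneg hd he, mul_nonneg ha hd', mul_nonneg (mul_nonneg hd hd) hd,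
    mul_nonneg (mul_nonneg he he) he, mul_nonneg (mul_nonneg hd hd) he,
    mul_nonneg (mul_nonneg hd he) he, mul_nonneg ha hd, mul_nonneg hd' hd, mul_nonneg ha he,
    mul_nonneg hd' he]

theorem le_tentBound {N k M : ℝ} (hk : 0 ≤ k) (hkN : k + 1 ≤ N) (hM : 2 ≤ M)
    (hlo : (k + 3) + 4 * (N - k - 1) ≤ (k + 3) * M)
    (hhi : (k + 3) * M ≤ 2 * (k + 3) + 4 * (N - k - 1)) :
    1 / (2 * (2 - (k + 1) / (N + 1)) ^ 2) * ((N + 1) / (N + 1 - 1)) ≤ tentBound N k M := by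
  set a := k + 3
  set d := N - k - 1
  set e := a * M - a - 4 * d
  have quartic :
      (a * M) ^ 2 * ((a * M) ^ 2 - a ^ 2) ≤ 24 * (2 * d + e) ^ 2 * (2 * N - k + 1) ^ 2 := by
    have h := tent_quartic_le (a := a) (d := d) (e := e) (by linarith) (by linarith) (by linarith)
      (by nlinarith)
    convert h using 2 <;> ring
  have hweight : (N + 1) * (k + 2) ^ 2 ≤ N * a ^ 2 := by nlinarith
  have hM2 : 0 < M ^ 2 * (M ^ 2 - 1) := mul_pos (by positivity) (by nlinarith)
  have hlhs : 1 / (2 * (2 - (k + 1) / (N + 1)) ^ 2) * ((N + 1) / (N + 1 - 1))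
      = (N + 1) ^ 3 / (2 * (2 * N - k + 1) ^ 2 * N) := by
    have : N + 1 ≠ 0 := by linarith
    field_simp
    ring
  have hden : 0 < 2 * (2 * N - k + 1) ^ 2 * N := by
    have : 0 < 2 * N - k + 1 := by linarith
    have : 0 < N := by linarith
    positivity
  rw [hlhs, tentBound, show (M - 1) * (k + 3) - 2 * (N - k - 1) = 2 * d + e by ring,
    div_le_div_iff₀ hden (by positivity)]
  have ha : 0 < a ^ 2 := by positivity
  have hquartic_nonneg : 0 ≤ (a * M) ^ 2 * ((a * M) ^ 2 - a ^ 2) := by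
    rw [show (a * M) ^ 2 * ((a * M) ^ 2 - a ^ 2) = a ^ 4 * (M ^ 2 * (M ^ 2 - 1)) by ring]
    positivity
  refine le_of_mul_le_mul_right ?_ ha
  calc (N + 1) ^ 3 * ((k + 2) ^ 2 * a ^ 2 * (M ^ 2 * (M ^ 2 - 1))) * a ^ 2
      = (N + 1) ^ 2 * (((N + 1) * (k + 2) ^ 2) * ((a * M) ^ 2 * ((a * M) ^ 2 - a ^ 2))) := by ring
    _ ≤ (N + 1) ^ 2 * ((N * a ^ 2) * (24 * (2 * d + e) ^ 2 * (2 * N - k + 1) ^ 2)) := by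
      gcongr ?_ * ?_
      exact mul_le_mul hweight quartic hquartic_nonneg (mul_nonneg (by linarith) ha.le)
    _ = 12 * (N + 1) ^ 2 * (2 * d + e) ^ 2 * (2 * (2 * N - k + 1) ^ 2 * N) * a ^ 2 := by ring

theorem Nat.exists_mul_mem_Icc {a : ℕ} (ha : 4 ≤ a) (D : ℕ) :
    ∃ M, 2 ≤ M ∧ M ≤ D + 2 ∧ a + 4 * D ≤ a * M ∧ a * M ≤ 2 * a + 4 * D := by
  have hdiv := Nat.div_add_mod (4 * D) a
  have hmod := Nat.mod_lt (4 * D) (by omega : 0 < a)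
  have hle : 4 * D / a ≤ D := Nat.div_le_of_le_mul (by nlinarith)
  refine ⟨4 * D / a + 2, Nat.le_add_left 2 _, Nat.add_le_add_right hle 2, ?_, ?_⟩ <;>
  · rw [mul_add]
    generalize 4 * D / a = m at *
    omega

theorem one_div_mul_le_sum_mul_choose_zero {N : ℕ} (hN : 0 < N) :
    1 / (2 * (2 - 1 / ((N : ℝ) + 1)) ^ 2) * ((N + 1) / N)
      ≤ ∑ ℓ ∈ Icc 1 N, (ℓ : ℝ) * (((N - ℓ).choose 0 : ℝ) / N.choose 1) ^ 2 := by
  have gauss (n : ℕ) : ∑ ℓ ∈ Icc 1 n, (ℓ : ℝ) = n * (n + 1) / 2 := by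
    induction n with
    | zero => simp
    | succ n ih => rw [sum_Icc_succ_top (by omega), ih]; push_cast; ring
  have hx : 1 ≤ 2 - 1 / ((N : ℝ) + 1) := by
    have : 1 / ((N : ℝ) + 1) ≤ 1 := div_le_one_of_le₀ (by linarith) (by positivity)
    linarith
  simp only [Nat.choose_zero_right, Nat.choose_one_right, Nat.cast_one, ← sum_mul, gauss]
  calc 1 / (2 * (2 - 1 / ((N : ℝ) + 1)) ^ 2) * (((N : ℝ) + 1) / N)
      ≤ 1 / (2 * 1 ^ 2) * (((N : ℝ) + 1) / N) := by gcongr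
    _ = (N : ℝ) * (N + 1) / 2 * (1 / N) ^ 2 := by field_simp

theorem stmt_17_general (p q : ℕ) (hq : 1 ≤ q) (hqp : q ≤ p - 1) :
    1 / (2 * (2 - (q : ℝ) / p) ^ 2) * ((p : ℝ) / ((p : ℝ) - 1))
      ≤ ∑ ℓ ∈ Finset.Icc 1 (p - 1),
          (ℓ : ℝ) * (((p - 1 - ℓ).choose (q - 1) : ℝ) / ((p - 1).choose q : ℝ)) ^ 2 := by
  obtain ⟨N, rfl⟩ : ∃ N, p = N + 1 := ⟨p - 1, by omega⟩
  obtain ⟨k, rfl⟩ : ∃ k, q = k + 1 := ⟨q - 1, by omega⟩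
  simp only [Nat.add_sub_cancel] at hqp ⊢
  push_cast
  rcases k.eq_zero_or_pos with rfl | hk
  · simpa using one_div_mul_le_sum_mul_choose_zero (N := N) (by omega)
  obtain ⟨D, rfl⟩ : ∃ D, N = k + 1 + D := ⟨N - (k + 1), by omega⟩
  obtain ⟨M, hM, hMD, hlo, hhi⟩ := Nat.exists_mul_mem_Icc (a := k + 3) (by omega) D
  have hD : ((k + 1 + D : ℕ) : ℝ) - k - 1 = D := by push_cast; ring
  have hlo' : ((k : ℝ) + 3) + 4 * D ≤ (k + 3) * M := by exact_mod_cast hlo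
  have hhi' : ((k : ℝ) + 3) * M ≤ 2 * (k + 3) + 4 * D := by exact_mod_cast hhi
  refine le_trans (le_tentBound (M := M) (by positivity) (by push_cast; linarith)
    (by exact_mod_cast hM) (by rwa [hD]) (by rwa [hD]))
    (tentBound_le_sum_mul_choose_div_choose_sq hqp hM (by omega) ?_)
  rw [hD]
  linarith

/-- Lemma 6 (lower bound for the weighted sum of squared hypergeometric-type weights). -/
theorem stmt_17 (p q : ℕ) (hp3 : 3 ≤ p) (hq : 1 ≤ q) (hqp : q ≤ p - 1) :
    1 / (2 * (2 - (q : ℝ) / p) ^ 2) * ((p : ℝ) / ((p : ℝ) - 1))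
      ≤ ∑ ℓ ∈ Finset.Icc 1 (p - 1),
          (ℓ : ℝ) * (((p - 1 - ℓ).choose (q - 1) : ℝ) / ((p - 1).choose q : ℝ)) ^ 2 :=
  stmt_17_general p q hq hqp
end

section
/- For every real number a ∈ [0,1] and every integer ℓ ≥ 2, (1/ℓ!) ∏_{j=0}^{ℓ−1} (a + j) ≤ a e^a / ℓ^{1−a}. (The left-hand side equals |κ^{(ℓ)}(1)| / ℓ! for the function κ(δ) = δ^{−a}.) -/
open Finset

/-!
Write `∏_{j<ℓ} (a + j) = a ∏_{j=1}^{ℓ-1} (a + j)` and bound each factor by `a + j ≤ j e^{a/j}`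
(i.e. `1 + x ≤ eˣ`). This gives `(ℓ-1)! e^{a H_{ℓ-1}}`, and `H_{ℓ-1} ≤ 1 + log ℓ` turns the
exponential into `e^a ℓ^a`; dividing by `ℓ! = ℓ (ℓ-1)!` leaves `a e^a ℓ^{a-1}`.
-/

open scoped Nat

namespace Real

lemma add_le_mul_exp_div (a : ℝ) {x : ℝ} (hx : 0 < x) : a + x ≤ x * exp (a / x) :=
  calc a + x = x * (a / x + 1) := by field_simp
    _ ≤ x * exp (a / x) := by gcongr; exact add_one_le_exp _

lemma prod_range_add_succ_le_factorial_mul_exp_harmonic {a : ℝ} (ha : -1 ≤ a) (m : ℕ) :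
    ∏ j ∈ range m, (a + (j + 1)) ≤ m ! * exp (a * harmonic m) :=
  calc ∏ j ∈ range m, (a + (j + 1))
      ≤ ∏ j ∈ range m, ((j + 1 : ℝ) * exp (a / (j + 1))) :=
        prod_le_prod (fun j _ => by linarith [j.cast_nonneg (α := ℝ)])
          fun j _ => add_le_mul_exp_div a (by positivity)
    _ = m ! * exp (a * harmonic m) := by
        rw [prod_mul_distrib, ← exp_sum, harmonic, Rat.cast_sum, mul_sum,
          ← prod_range_add_one_eq_factorial]
        push_cast
        simp only [div_eq_mul_inv]

lemma harmonic_le_one_add_log_succ (m : ℕ) : (harmonic m : ℝ) ≤ 1 + log (m + 1) := by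
  rcases m.eq_zero_or_pos with rfl | hm
  · simp
  · have := log_le_log (Nat.cast_pos.mpr hm) (le_add_of_nonneg_right zero_le_one)
    linarith [harmonic_le_one_add_log m]

lemma exp_mul_harmonic_le {a : ℝ} (ha : 0 ≤ a) (m : ℕ) :
    exp (a * harmonic m) ≤ exp a * (m + 1) ^ a := by
  rw [rpow_def_of_pos (by positivity), ← exp_add]
  gcongr
  nlinarith [harmonic_le_one_add_log_succ m]

lemma prod_range_succ_add_le {a : ℝ} (ha : 0 ≤ a) (m : ℕ) :
    ∏ j ∈ range (m + 1), (a + j) ≤ a * m ! * (exp a * (m + 1) ^ a) := by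
  rw [prod_range_succ', Nat.cast_zero, add_zero, mul_comm _ a, mul_assoc]
  gcongr
  push_cast
  exact (prod_range_add_succ_le_factorial_mul_exp_harmonic (by linarith) m).trans
    (by gcongr; exact exp_mul_harmonic_le ha m)

end Real

theorem stmt_18_general (a : ℝ) (ha0 : 0 ≤ a) (ℓ : ℕ) (hℓ : 2 ≤ ℓ) :
    (∏ j ∈ Finset.range ℓ, (a + (j : ℝ))) / (Nat.factorial ℓ : ℝ)
      ≤ a * Real.exp a / (ℓ : ℝ) ^ (1 - a) := by
  obtain ⟨m, rfl⟩ : ∃ m, ℓ = m + 1 := ⟨ℓ - 1, by omega⟩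
  have hm : (0 : ℝ) < m + 1 := by positivity
  have hrhs : a * Real.exp a / ((m + 1 : ℕ) : ℝ) ^ (1 - a)
      = a * m ! * (Real.exp a * (m + 1) ^ a) / (m + 1)! := by
    push_cast
    rw [Real.rpow_sub hm, Real.rpow_one, Nat.factorial_succ]
    push_cast
    field_simp
  rw [hrhs]
  gcongr
  exact_mod_cast Real.prod_range_succ_add_le ha0 m

/-- Lemma 7 (bound on the Taylor coefficients of `κ(δ) = δ^{-a}` at `1`):
`|κ^{(ℓ)}(1)|/ℓ! = a(a+1)⋯(a+ℓ−1)/ℓ! ≤ a e^a / ℓ^{1−a}`. -/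
theorem stmt_18 (a : ℝ) (ha0 : 0 ≤ a) (ha1 : a ≤ 1) (ℓ : ℕ) (hℓ : 2 ≤ ℓ) :
    (∏ j ∈ Finset.range ℓ, (a + (j : ℝ))) / (Nat.factorial ℓ : ℝ)
      ≤ a * Real.exp a / (ℓ : ℝ) ^ (1 - a) :=
  stmt_18_general a ha0 ℓ hℓ
end
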